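/- arXiv:1906.11986 — 6 statements merged into one kernel-verified Lean document; each statement's English description precedes it below -/
import Mathlib

section
/- Fix ε > 0 and let α := limsup_{N→∞} log(#𝔈_N)/N. Then for (Lebesgue-)almost all real numbers τ, there exists N₀ (depending on τ and ε) such that 𝔪_N(τ) > exp(−(α+ε)·N) for all integers N ≥ N₀. -/
/-! The set of `τ` with `𝔪_N(τ) ≤ r` is covered by `#𝔖_N` intervals of length `2r`, and
`#𝔖_N ≤ #𝔈_N` since `s_n = 2 t_n - 1` makes `𝔖_N` the image of `𝔈_N` under `q ↦ 2q - H_N`.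
With `r = exp(-(α+ε)N)` and `#𝔈_N ≤ exp((α+ε/2)N)` for large `N`, the measures of these sets
are summable, so by Borel–Cantelli almost every `τ` lies in only finitely many of them. -/

open Finset

/-- The set of Egyptian fractions with denominators at most `N`. -/
def egyptianFractions (N : ℕ) : Finset ℚ :=
  (Finset.Icc 1 N).powerset.image (fun s : Finset ℕ => ∑ n ∈ s, (1 : ℚ) / (n : ℚ))

/-- The set `𝔖_N = { ∑_{n=1}^N s_n/n : s_n ∈ {-1,+1} }`. -/
def signedSums (N : ℕ) : Finset ℚ :=
  (Finset.Icc 1 N).powerset.image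
    (fun s : Finset ℕ => ∑ n ∈ Finset.Icc 1 N, (if n ∈ s then (1 : ℚ) else -1) / (n : ℚ))

/-- `𝔪_N(τ) = min { |τ - σ| : σ ∈ 𝔖_N }`. -/
noncomputable def mN (N : ℕ) (τ : ℝ) : ℝ :=
  sInf {x : ℝ | ∃ σ ∈ signedSums N, x = |τ - (σ : ℝ)|}

/-- `α = limsup_{N → ∞} log(#𝔈_N)/N`. -/
noncomputable def alphaEgyptian : ℝ :=
  Filter.atTop.limsup (fun N : ℕ => Real.log (egyptianFractions N).card / N)

open MeasureTheory Filter Real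

lemma egyptianFractions_nonempty (N : ℕ) : (egyptianFractions N).Nonempty :=
  Finset.image_nonempty.2 ⟨∅, Finset.empty_mem_powerset _⟩

lemma signedSums_nonempty (N : ℕ) : (signedSums N).Nonempty :=
  Finset.image_nonempty.2 ⟨∅, Finset.empty_mem_powerset _⟩

lemma card_egyptianFractions_le (N : ℕ) : #(egyptianFractions N) ≤ 2 ^ N :=
  calc #(egyptianFractions N) ≤ #(Finset.Icc 1 N).powerset := Finset.card_image_le
    _ = 2 ^ N := by simp

lemma signedSums_eq_image_egyptianFractions (N : ℕ) :
    signedSums N = (egyptianFractions N).image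
      (fun q => 2 * q - ∑ n ∈ Finset.Icc 1 N, (1 : ℚ) / n) := by
  rw [signedSums, egyptianFractions, Finset.image_image]
  refine Finset.image_congr fun s hs => ?_
  have hsum : ∑ n ∈ s, (1 : ℚ) / n =
      ∑ n ∈ Finset.Icc 1 N, if n ∈ s then (1 : ℚ) / n else 0 := by
    rw [Finset.sum_ite_mem, Finset.inter_eq_right.2 (Finset.mem_powerset.1 hs)]
  rw [Function.comp_apply, hsum, Finset.mul_sum, ← Finset.sum_sub_distrib]
  refine Finset.sum_congr rfl fun n _ => ?_
  split_ifs <;> ring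

lemma card_signedSums_le (N : ℕ) : #(signedSums N) ≤ #(egyptianFractions N) := by
  rw [signedSums_eq_image_egyptianFractions]
  exact Finset.card_image_le

lemma log_card_egyptianFractions_div_le (N : ℕ) :
    Real.log #(egyptianFractions N) / N ≤ Real.log 2 := by
  rcases N.eq_zero_or_pos with rfl | hN
  · simpa using Real.log_nonneg one_le_two
  have hcard : (#(egyptianFractions N) : ℝ) ≤ 2 ^ N := by
    exact_mod_cast card_egyptianFractions_le N
  rw [div_le_iff₀ (by positivity), mul_comm, ← Real.log_pow]
  exact Real.log_le_log (by exact_mod_cast (egyptianFractions_nonempty N).card_pos) hcard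

lemma eventually_le_exp_of_limsup_log_div_lt {u : ℕ → ℝ} {β : ℝ} (hu : ∀ N, 0 < u N)
    (hbdd : IsBoundedUnder (· ≤ ·) atTop fun N : ℕ => Real.log (u N) / N)
    (hβ : limsup (fun N : ℕ => Real.log (u N) / N) atTop < β) :
    ∀ᶠ N : ℕ in atTop, u N ≤ exp (β * N) := by
  filter_upwards [eventually_lt_of_limsup_lt hβ hbdd, eventually_ge_atTop 1] with N hlt hN
  rw [div_lt_iff₀ (by exact_mod_cast hN)] at hlt
  exact (Real.log_le_iff_le_exp (hu N)).1 hlt.le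

lemma summable_card_signedSums_mul_exp {ε : ℝ} (hε : 0 < ε) :
    Summable fun N : ℕ => (#(signedSums N) : ℝ) * exp (-(alphaEgyptian + ε) * N) := by
  have hcard : ∀ᶠ N : ℕ in atTop,
      (#(egyptianFractions N) : ℝ) ≤ exp ((alphaEgyptian + ε / 2) * N) :=
    eventually_le_exp_of_limsup_log_div_lt
      (fun N => by exact_mod_cast (egyptianFractions_nonempty N).card_pos)
      (isBoundedUnder_of ⟨_, log_card_egyptianFractions_div_le⟩)
      (lt_add_of_pos_right alphaEgyptian (half_pos hε))
  have hgeometric : Summable fun N : ℕ => exp (N * -(ε / 2)) :=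
    summable_exp_nat_mul_iff.2 (by linarith)
  refine hgeometric.of_norm_bounded_eventually_nat ?_
  filter_upwards [hcard] with N hN
  have hsigned : (#(signedSums N) : ℝ) ≤ exp ((alphaEgyptian + ε / 2) * N) :=
    le_trans (by exact_mod_cast card_signedSums_le N) hN
  calc ‖(#(signedSums N) : ℝ) * exp (-(alphaEgyptian + ε) * N)‖
      = #(signedSums N) * exp (-(alphaEgyptian + ε) * N) := by
        rw [Real.norm_of_nonneg (by positivity)]
    _ ≤ exp ((alphaEgyptian + ε / 2) * N) * exp (-(alphaEgyptian + ε) * N) := by gcongr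
    _ = exp (N * -(ε / 2)) := by rw [← Real.exp_add]; ring_nf

lemma exists_mem_signedSums_mN_eq (N : ℕ) (τ : ℝ) :
    ∃ σ ∈ signedSums N, mN N τ = |τ - σ| := by
  have hset : {x : ℝ | ∃ σ ∈ signedSums N, x = |τ - σ|} =
      (fun σ : ℚ => |τ - σ|) '' (signedSums N : Set ℚ) := by
    ext x
    simp [eq_comm]
  obtain ⟨σ, hσ⟩ := signedSums_nonempty N
  have hne : {x : ℝ | ∃ σ ∈ signedSums N, x = |τ - σ|}.Nonempty := ⟨_, σ, hσ, rfl⟩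
  exact hne.csInf_mem (hset ▸ (signedSums N).finite_toSet.image _)

lemma setOf_mN_le_subset (N : ℕ) (r : ℝ) :
    {τ | mN N τ ≤ r} ⊆ ⋃ σ ∈ signedSums N, Metric.closedBall (σ : ℝ) r := by
  intro τ hτ
  obtain ⟨σ, hσ, hmin⟩ := exists_mem_signedSums_mN_eq N τ
  exact Set.mem_biUnion hσ (by rwa [Metric.mem_closedBall, Real.dist_eq, ← hmin])

lemma volume_biUnion_closedBall_le {ι : Type*} (S : Finset ι) (x : ι → ℝ) (r : ℝ) :
    volume (⋃ i ∈ S, Metric.closedBall (x i) r) ≤ ENNReal.ofReal (#S * (2 * r)) :=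
  calc volume (⋃ i ∈ S, Metric.closedBall (x i) r)
      ≤ ∑ i ∈ S, volume (Metric.closedBall (x i) r) := measure_biUnion_finset_le _ _
    _ = ENNReal.ofReal (#S * (2 * r)) := by
        simp [Real.volume_closedBall, ENNReal.ofReal_mul]

lemma ae_eventually_notMem_of_summable {α : Type*} [MeasurableSpace α] {μ : Measure α}
    {s : ℕ → Set α} {f : ℕ → ℝ} (hf : Summable f)
    (hs : ∀ n, μ (s n) ≤ ENNReal.ofReal (f n)) :
    ∀ᵐ x ∂μ, ∀ᶠ n in atTop, x ∉ s n :=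
  ae_eventually_notMem (ne_top_of_le_ne_top hf.tsum_ofReal_ne_top (ENNReal.tsum_le_tsum hs))

theorem mN_almost_everywhere_lower_bound (ε : ℝ) (hε : 0 < ε) :
    ∀ᵐ τ : ℝ ∂MeasureTheory.volume, ∃ N₀ : ℕ, ∀ N : ℕ, N₀ ≤ N →
      mN N τ > Real.exp (-(alphaEgyptian + ε) * N) := by
  have hvolume : ∀ N : ℕ, volume {τ | mN N τ ≤ exp (-(alphaEgyptian + ε) * N)} ≤
      ENNReal.ofReal (#(signedSums N) * (2 * exp (-(alphaEgyptian + ε) * N))) := fun N =>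
    (measure_mono (setOf_mN_le_subset N _)).trans (volume_biUnion_closedBall_le _ _ _)
  have hsummable := (summable_card_signedSums_mul_exp hε).mul_left 2
  filter_upwards [ae_eventually_notMem_of_summable (hsummable.congr fun N => by ring) hvolume]
    with τ hτ
  obtain ⟨N₀, hN₀⟩ := eventually_atTop.1 hτ
  exact ⟨N₀, fun N hN => not_le.1 (hN₀ N hN)⟩
end

section
/- For each prime p let μ_p be a positive integer, and suppose μ_p = 1 for all but finitely many primes p. Let D := { n ∈ ℕ_{>0} : μ_p divides ν_p(n) for every prime p }, where ν_p(n) is the p-adic valuation of n. Then D has natural density δ := ∏_p (1 − p^{−1})/(1 − p^{−μ_p}), i.e., #(D ∩ [1,x]) / x → δ as x → +∞ (only the finitely many primes with μ_p > 1 contribute nontrivially to the product). -/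
/-!
Induct on the finite set of primes `p` with `μ p ≠ 1`. Let `A` be the set of `n > 0` with
`μ p ∣ ν_p(n)` for the primes `p` treated so far, of density `δ`, and let `q` be a new prime.
Multiplying by `q` preserves `A`, so the multiples of `q` in `A` form `q • A`, and the elements
of `A` prime to `q` have density `δ (1 - 1/q)`. Imposing `μ q ∣ ν_q(n)` leaves exactly the numbers
`q ^ (μ q * i) * m` with `m ∈ A` prime to `q`: a disjoint union of dilates of densities
`δ (1 - 1/q) q ^ (-μ q * i)`, which may be summed over `i` by dominated convergence (Tannery).
-/

open Finset Filter Topology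
open scoped Function

theorem tendsto_natCast_div_div_self (k : ℕ) :
    Tendsto (fun x : ℕ => ((x / k : ℕ) : ℝ) / x) atTop (𝓝 (k : ℝ)⁻¹) := by
  refine ((tendsto_nat_floor_mul_div_atTop (inv_nonneg.2 k.cast_nonneg)).comp
    tendsto_natCast_atTop_atTop).congr fun x => ?_
  simp [inv_mul_eq_div, Nat.floor_div_eq_div]

theorem tendsto_apply_div_div {M : ℕ → ℝ} {γ : ℝ}
    (hM : Tendsto (fun y : ℕ => M y / y) atTop (𝓝 γ)) {k : ℕ} (hk : 0 < k) :
    Tendsto (fun x : ℕ => M (x / k) / x) atTop (𝓝 (γ / k)) := by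
  have h := (hM.comp (Nat.tendsto_div_const_atTop hk.ne')).mul (tendsto_natCast_div_div_self k)
  rw [← div_eq_mul_inv] at h
  refine h.congr' ?_
  filter_upwards [eventually_ge_atTop k] with x hx
  have : ((x / k : ℕ) : ℝ) ≠ 0 := by
    exact_mod_cast (Nat.div_pos hx hk).ne'
  simp only [Function.comp_apply]
  field_simp

theorem natCast_div_div_le_inv (x k : ℕ) : ((x / k : ℕ) : ℝ) / x ≤ (k : ℝ)⁻¹ := by
  rcases x.eq_zero_or_pos with rfl | hx
  · simp
  calc ((x / k : ℕ) : ℝ) / x ≤ (x / k : ℝ) / x := by gcongr; exact Nat.cast_div_le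
    _ = (k : ℝ)⁻¹ := by field_simp

theorem tendsto_sum_apply_div_pow_div {M : ℕ → ℝ} (hM : ∀ y, |M y| ≤ y) {γ : ℝ}
    (hγ : Tendsto (fun y : ℕ => M y / y) atTop (𝓝 γ)) {c : ℕ} (hc : 2 ≤ c) :
    Tendsto (fun x : ℕ => (∑ b ∈ range (x + 1), M (x / c ^ b)) / x) atTop
      (𝓝 (γ / (1 - (c : ℝ)⁻¹))) := by
  have hc₀ : (0 : ℝ) ≤ (c : ℝ)⁻¹ := by positivity
  have hc₁ : (c : ℝ)⁻¹ < 1 := inv_lt_one_of_one_lt₀ (by exact_mod_cast hc)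
  have hM₀ : M 0 = 0 := abs_nonpos_iff.1 (by simpa using hM 0)
  have hsum : ∀ x : ℕ, (∑ b ∈ range (x + 1), M (x / c ^ b)) / x = ∑' b, M (x / c ^ b) / x := by
    intro x
    rw [sum_div, tsum_eq_sum fun b hb => ?_]
    have : x < c ^ b := by
      calc x < b := by simpa using hb
        _ < 2 ^ b := b.lt_two_pow_self
        _ ≤ c ^ b := Nat.pow_le_pow_left hc b
    simp [Nat.div_eq_of_lt this, hM₀]
  have hlim : γ / (1 - (c : ℝ)⁻¹) = ∑' b : ℕ, γ / (c ^ b : ℕ) := by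
    simp_rw [div_eq_mul_inv γ, tsum_mul_left, Nat.cast_pow, ← inv_pow,
      tsum_geometric_of_lt_one hc₀ hc₁]
  simp_rw [hsum, hlim]
  refine tendsto_tsum_of_dominated_convergence (summable_geometric_of_lt_one hc₀ hc₁)
    (fun b => tendsto_apply_div_div hγ (pow_pos (by omega) b)) (.of_forall fun x b => ?_)
  calc ‖M (x / c ^ b) / x‖ ≤ ((x / c ^ b : ℕ) : ℝ) / x := by
        rw [norm_div, Real.norm_natCast]
        gcongr
        exact hM _
    _ ≤ ((c ^ b : ℕ) : ℝ)⁻¹ := natCast_div_div_le_inv x (c ^ b)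
    _ = (c : ℝ)⁻¹ ^ b := by push_cast; rw [inv_pow]

def HasNatDensity (A : Set ℕ) (d : ℝ) : Prop :=
  Tendsto (fun x : ℕ => ((A ∩ Set.Icc 1 x).ncard : ℝ) / x) atTop (𝓝 d)

theorem ncard_inter_Icc_one_le (A : Set ℕ) (x : ℕ) : (A ∩ Set.Icc 1 x).ncard ≤ x :=
  (Set.ncard_le_ncard Set.inter_subset_right (Set.finite_Icc 1 x)).trans (by simp)

theorem image_mul_inter_Icc_one {k : ℕ} (hk : 0 < k) (A : Set ℕ) (x : ℕ) :
    (k * ·) '' A ∩ Set.Icc 1 x = (k * ·) '' (A ∩ Set.Icc 1 (x / k)) := by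
  ext n
  simp only [Set.mem_inter_iff, Set.mem_image, Set.mem_Icc, Nat.le_div_iff_mul_le hk]
  constructor
  · rintro ⟨⟨m, hm, rfl⟩, h₁, h₂⟩
    exact ⟨m, ⟨hm, Nat.pos_of_mul_pos_left h₁, by linarith⟩, rfl⟩
  · rintro ⟨m, ⟨hm, h₁, h₂⟩, rfl⟩
    exact ⟨⟨m, hm, rfl⟩, Nat.mul_pos hk h₁, by linarith⟩

theorem ncard_image_mul_inter_Icc_one {k : ℕ} (hk : 0 < k) (A : Set ℕ) (x : ℕ) :
    ((k * ·) '' A ∩ Set.Icc 1 x).ncard = (A ∩ Set.Icc 1 (x / k)).ncard := by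
  rw [image_mul_inter_Icc_one hk, Set.ncard_image_of_injective _ (mul_right_injective₀ hk.ne')]

namespace HasNatDensity

variable {A B : Set ℕ} {a b : ℝ}

theorem image_mul (h : HasNatDensity A a) {k : ℕ} (hk : 0 < k) :
    HasNatDensity ((k * ·) '' A) (a / k) := by
  unfold HasNatDensity
  simp_rw [ncard_image_mul_inter_Icc_one hk]
  exact tendsto_apply_div_div h hk

theorem diff (hA : HasNatDensity A a) (hB : HasNatDensity B b) (hBA : B ⊆ A) :
    HasNatDensity (A \ B) (a - b) := by
  unfold HasNatDensity
  simp_rw [Set.inter_sdiff_distrib_right,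
    Set.cast_ncard_sdiff (Set.inter_subset_inter_left _ hBA)
      ((Set.finite_Icc 1 _).inter_of_right _),
    sub_div]
  exact hA.sub hB

theorem iUnion_image_mul_pow (h : HasNatDensity B b) {c : ℕ} (hc : 2 ≤ c)
    (hdisj : Pairwise (Disjoint on fun i : ℕ => (c ^ i * ·) '' B)) :
    HasNatDensity (⋃ i, (c ^ i * ·) '' B) (b / (1 - (c : ℝ)⁻¹)) := by
  have hcount : ∀ x : ℕ, (((⋃ i, (c ^ i * ·) '' B) ∩ Set.Icc 1 x).ncard : ℝ) =
      ∑ i ∈ range (x + 1), ((B ∩ Set.Icc 1 (x / c ^ i)).ncard : ℝ) := by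
    intro x
    have hsplit : (⋃ i, (c ^ i * ·) '' B) ∩ Set.Icc 1 x =
        ⋃ i ∈ (range (x + 1) : Set ℕ), (c ^ i * ·) '' B ∩ Set.Icc 1 x := by
      ext n
      simp only [Set.iUnion_inter, Set.mem_iUnion, coe_range, exists_prop]
      refine ⟨fun ⟨i, hi⟩ => ⟨i, ?_, hi⟩, fun ⟨i, _, hi⟩ => ⟨i, hi⟩⟩
      obtain ⟨⟨m, -, rfl⟩, h₁, h₂⟩ := hi
      calc i < 2 ^ i := i.lt_two_pow_self
        _ ≤ c ^ i * m := (Nat.pow_le_pow_left hc i).trans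
          (Nat.le_mul_of_pos_right _ (Nat.pos_of_mul_pos_left h₁))
        _ < x + 1 := Nat.lt_succ_of_le h₂
    rw [hsplit, (finite_toSet _).ncard_biUnion (fun _ _ => (Set.finite_Icc 1 x).inter_of_right _)
      fun i _ j _ hij => (hdisj hij).mono Set.inter_subset_left Set.inter_subset_left,
      finsum_mem_coe_finset]
    push_cast
    exact sum_congr rfl fun i _ => by rw [ncard_image_mul_inter_Icc_one (pow_pos (by omega) i)]
  unfold HasNatDensity
  simp_rw [hcount]
  exact tendsto_sum_apply_div_pow_div (fun y => by simpa using ncard_inter_Icc_one_le B y) h hc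

end HasNatDensity

theorem hasNatDensity_setOf_pos : HasNatDensity {n | 0 < n} 1 := by
  refine tendsto_const_nhds.congr' ?_
  filter_upwards [eventually_ge_atTop 1] with x hx
  have hIcc : {n | 0 < n} ∩ Set.Icc 1 x = Set.Icc 1 x :=
    Set.inter_eq_right.2 fun n hn => hn.1
  rw [hIcc, Set.ncard_Icc_nat, Nat.add_sub_cancel, div_self (by positivity)]

def valuationDvdSet (μ : ℕ → ℕ) (S : Set ℕ) : Set ℕ :=
  {n | 0 < n ∧ ∀ p ∈ S, μ p ∣ n.factorization p}

theorem factorization_prime_pow_mul_of_ne {p q : ℕ} (hq : q.Prime) (hpq : p ≠ q) (k : ℕ)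
    {m : ℕ} (hm : m ≠ 0) : (q ^ k * m).factorization p = m.factorization p := by
  rw [Nat.factorization_mul (pow_ne_zero k hq.ne_zero) hm, hq.factorization_pow]
  simp [hpq]

theorem factorization_prime_pow_mul_self {q : ℕ} (hq : q.Prime) (k : ℕ) {m : ℕ} (hm : ¬q ∣ m) :
    (q ^ k * m).factorization q = k := by
  rw [Nat.factorization_mul (pow_ne_zero k hq.ne_zero) (by rintro rfl; exact hm (dvd_zero q)),
    hq.factorization_pow]
  simp [Nat.factorization_eq_zero_of_not_dvd hm]

section valuationDvdSet

variable {μ : ℕ → ℕ} {S : Set ℕ} {q : ℕ}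

theorem prime_pow_mul_mem_valuationDvdSet_iff (hq : q.Prime) (hqS : q ∉ S) (k m : ℕ) :
    q ^ k * m ∈ valuationDvdSet μ S ↔ m ∈ valuationDvdSet μ S := by
  rcases eq_or_ne m 0 with rfl | hm
  · simp [valuationDvdSet]
  have hfac : ∀ p ∈ S, (q ^ k * m).factorization p = m.factorization p := fun p hp =>
    factorization_prime_pow_mul_of_ne hq (ne_of_mem_of_not_mem hp hqS) k hm
  simp +contextual only [valuationDvdSet, Set.mem_ofPred_eq, hfac, Nat.pos_of_ne_zero hm,
    Nat.pos_of_ne_zero (mul_ne_zero (pow_ne_zero k hq.ne_zero) hm)]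

theorem image_mul_valuationDvdSet_subset (hq : q.Prime) (hqS : q ∉ S) :
    (q * ·) '' valuationDvdSet μ S ⊆ valuationDvdSet μ S := by
  rintro _ ⟨m, hm, rfl⟩
  simpa using (prime_pow_mul_mem_valuationDvdSet_iff hq hqS 1 m).2 hm

theorem valuationDvdSet_diff_image_mul (hq : q.Prime) (hqS : q ∉ S) :
    valuationDvdSet μ S \ (q * ·) '' valuationDvdSet μ S =
      {n ∈ valuationDvdSet μ S | ¬q ∣ n} := by
  ext n
  constructor
  · rintro ⟨hn, hnq⟩
    refine ⟨hn, fun ⟨m, hm⟩ => hnq ⟨m, ?_, hm.symm⟩⟩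
    exact (prime_pow_mul_mem_valuationDvdSet_iff hq hqS 1 m).1 (by rwa [pow_one, ← hm])
  · rintro ⟨hn, hqn⟩
    exact ⟨hn, fun ⟨m, _, hm⟩ => hqn ⟨m, hm.symm⟩⟩

theorem valuationDvdSet_insert (hq : q.Prime) (hqS : q ∉ S) :
    valuationDvdSet μ (insert q S) =
      ⋃ i, ((q ^ μ q) ^ i * ·) '' {n ∈ valuationDvdSet μ S | ¬q ∣ n} := by
  ext n
  simp only [Set.mem_iUnion, Set.mem_image, ← pow_mul]
  constructor
  · rintro ⟨hn, hdvd⟩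
    obtain ⟨i, hi⟩ := hdvd q (Set.mem_insert q S)
    have hsplit : q ^ n.factorization q * ordCompl[q] n = n :=
      Nat.ordProj_mul_ordCompl_eq_self n q
    refine ⟨i, ordCompl[q] n, ⟨?_, Nat.not_dvd_ordCompl hq hn.ne'⟩, hi ▸ hsplit⟩
    rw [← prime_pow_mul_mem_valuationDvdSet_iff hq hqS (n.factorization q), hsplit]
    exact ⟨hn, fun p hp => hdvd p (Set.mem_insert_of_mem q hp)⟩
  · rintro ⟨i, m, ⟨hm, hqm⟩, rfl⟩
    obtain ⟨hpos, hdvd⟩ := (prime_pow_mul_mem_valuationDvdSet_iff hq hqS (μ q * i) m).2 hm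
    refine ⟨hpos, ?_⟩
    rintro p (rfl | hp)
    · rw [factorization_prime_pow_mul_self hq _ hqm]
      exact dvd_mul_right _ _
    · exact hdvd p hp

end valuationDvdSet

theorem pairwise_disjoint_image_prime_pow_mul {q e : ℕ} (hq : q.Prime) (he : 0 < e) {B : Set ℕ}
    (hB : ∀ n ∈ B, ¬q ∣ n) : Pairwise (Disjoint on fun i : ℕ => ((q ^ e) ^ i * ·) '' B) := by
  intro i j hij
  rw [Function.onFun, Set.disjoint_left]
  rintro _ ⟨m, hm, rfl⟩ ⟨m', hm', heq⟩
  have := congrArg (·.factorization q) heq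
  simp only [← pow_mul, factorization_prime_pow_mul_self hq _ (hB _ hm),
    factorization_prime_pow_mul_self hq _ (hB _ hm')] at this
  exact hij (Nat.eq_of_mul_eq_mul_left he this).symm

theorem hasNatDensity_valuationDvdSet (μ : ℕ → ℕ) (S : Finset ℕ)
    (hS : ∀ p ∈ S, p.Prime ∧ 0 < μ p) :
    HasNatDensity (valuationDvdSet μ S)
      (∏ p ∈ S, (1 - (p : ℝ)⁻¹) / (1 - (p : ℝ) ^ (-(μ p : ℤ)))) := by
  induction S using Finset.induction_on with
  | empty =>
    simpa [valuationDvdSet] using hasNatDensity_setOf_pos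
  | insert q S hqS ih =>
    obtain ⟨hq, hμq⟩ := hS q (mem_insert_self q S)
    have hqS' : q ∉ (S : Set ℕ) := mod_cast hqS
    have hA := ih fun p hp => hS p (mem_insert_of_mem hp)
    have hB := hA.diff (hA.image_mul hq.pos) (image_mul_valuationDvdSet_subset hq hqS')
    rw [valuationDvdSet_diff_image_mul hq hqS'] at hB
    have hc : 2 ≤ q ^ μ q := hq.two_le.trans (Nat.le_self_pow hμq.ne' q)
    have hU := hB.iUnion_image_mul_pow hc
      (pairwise_disjoint_image_prime_pow_mul hq hμq fun n hn => hn.2)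
    rw [coe_insert, valuationDvdSet_insert hq hqS', prod_insert hqS]
    convert hU using 1
    push_cast
    rw [zpow_neg, zpow_natCast]
    ring

theorem valuationDvdSet_inter_ne_one (μ : ℕ → ℕ) (S : Set ℕ) :
    valuationDvdSet μ (S ∩ {p | μ p ≠ 1}) = valuationDvdSet μ S := by
  ext n
  refine and_congr_right fun _ => ⟨fun h p hp => ?_, fun h p hp => h p hp.1⟩
  by_cases hμp : μ p = 1
  · simp [hμp]
  · exact h p ⟨hp, hμp⟩

theorem density_of_valuation_condition
    (μ : ℕ → ℕ) (hμpos : ∀ p : ℕ, p.Prime → 0 < μ p)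
    (hμfin : {p : ℕ | p.Prime ∧ μ p ≠ 1}.Finite) :
    Filter.Tendsto
      (fun x : ℕ =>
        (({n : ℕ | 0 < n ∧ ∀ p : ℕ, p.Prime → μ p ∣ n.factorization p} ∩
            Set.Icc 1 x).ncard : ℝ) / x)
      Filter.atTop
      (nhds (∏ᶠ p ∈ {p : ℕ | p.Prime},
        (1 - (p : ℝ)⁻¹) / (1 - (p : ℝ) ^ (-(μ p : ℤ))))) := by
  have hset : valuationDvdSet μ hμfin.toFinset = valuationDvdSet μ {p | p.Prime} := by
    rw [hμfin.coe_toFinset]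
    exact valuationDvdSet_inter_ne_one μ _
  have hprod : ∏ᶠ p ∈ {p : ℕ | p.Prime}, (1 - (p : ℝ)⁻¹) / (1 - (p : ℝ) ^ (-(μ p : ℤ))) =
      ∏ p ∈ hμfin.toFinset, (1 - (p : ℝ)⁻¹) / (1 - (p : ℝ) ^ (-(μ p : ℤ))) := by
    refine finprod_mem_eq_prod_of_subset _ (fun p ⟨hp, hfp⟩ => ?_)
      fun p hp => (hμfin.mem_toFinset.1 hp).1
    refine hμfin.mem_toFinset.2 ⟨hp, fun hμp => hfp ?_⟩
    have : (p : ℝ)⁻¹ ≠ 1 := inv_ne_one.2 (by exact_mod_cast hp.ne_one)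
    simp [hμp, sub_ne_zero.2 this.symm]
  have h := hasNatDensity_valuationDvdSet μ hμfin.toFinset fun p hp =>
    ⟨(hμfin.mem_toFinset.1 hp).1, hμpos p (hμfin.mem_toFinset.1 hp).1⟩
  rw [hset, ← hprod] at h
  exact h
end

section
/- Let 𝔞 be a finite nonempty set of positive integers, for each prime p set μ_p := 1 + max{ ν_p(a) : a ∈ 𝔞 }, and let D := { n ∈ ℕ_{>0} : μ_p divides ν_p(n) for every prime p }. Then for any two distinct elements k₁, k₂ ∈ D, the sets k₁·𝔞 := {k₁ a : a ∈ 𝔞} and k₂·𝔞 := {k₂ a : a ∈ 𝔞} are disjoint. -/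
/-!
At every prime `p`, `ν_p(k a) = ν_p(k) + ν_p(a)` where `μ_p ∣ ν_p(k)` and `ν_p(a) < μ_p`, so
`ν_p(k)` is `ν_p(k a)` rounded down to a multiple of `μ_p`. Hence `k` is determined by any
product `k a` with `a ∈ 𝔞`, and two distinct dilations cannot share an element.
-/

open Finset

theorem Nat.eq_of_dvd_of_add_eq_add_of_lt {μ m₁ m₂ r₁ r₂ : ℕ} (h₁ : μ ∣ m₁) (h₂ : μ ∣ m₂)
    (hr₁ : r₁ < μ) (hr₂ : r₂ < μ) (h : m₁ + r₁ = m₂ + r₂) : m₁ = m₂ := by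
  obtain ⟨c₁, rfl⟩ := h₁
  obtain ⟨c₂, rfl⟩ := h₂
  have hr : r₁ = r₂ := calc
    r₁ = (μ * c₁ + r₁) % μ := by rw [Nat.mul_add_mod, Nat.mod_eq_of_lt hr₁]
    _ = (μ * c₂ + r₂) % μ := by rw [h]
    _ = r₂ := by rw [Nat.mul_add_mod, Nat.mod_eq_of_lt hr₂]
  omega

theorem Nat.eq_of_mul_eq_mul_of_factorization_dvd_of_lt {k₁ k₂ a₁ a₂ : ℕ} (μ : ℕ → ℕ)
    (hk₁ : k₁ ≠ 0) (hk₂ : k₂ ≠ 0) (ha₁ : a₁ ≠ 0) (ha₂ : a₂ ≠ 0)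
    (hk₁μ : ∀ p, p.Prime → μ p ∣ k₁.factorization p)
    (hk₂μ : ∀ p, p.Prime → μ p ∣ k₂.factorization p)
    (ha₁μ : ∀ p, p.Prime → a₁.factorization p < μ p)
    (ha₂μ : ∀ p, p.Prime → a₂.factorization p < μ p)
    (h : k₁ * a₁ = k₂ * a₂) : k₁ = k₂ := by
  refine Nat.eq_of_factorization_eq hk₁ hk₂ fun p => ?_
  by_cases hp : p.Prime
  · have hsum : k₁.factorization p + a₁.factorization p
        = k₂.factorization p + a₂.factorization p := by
      simpa only [Nat.factorization_mul hk₁ ha₁, Nat.factorization_mul hk₂ ha₂,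
        Finsupp.add_apply] using congrArg (·.factorization p) h
    exact Nat.eq_of_dvd_of_add_eq_add_of_lt (hk₁μ p hp) (hk₂μ p hp) (ha₁μ p hp) (ha₂μ p hp) hsum
  · simp only [Nat.factorization_eq_zero_of_not_prime _ hp]

theorem Finset.lt_one_add_sup {α : Type*} {s : Finset α} {a : α} (f : α → ℕ) (ha : a ∈ s) :
    f a < 1 + s.sup f :=
  Nat.lt_one_add_iff.mpr (s.le_sup ha)

theorem dilations_disjoint_general
    (𝔞 : Finset ℕ) (hpos : ∀ a ∈ 𝔞, 0 < a)
    (D : Set ℕ)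
    (hD : D = {n : ℕ | 0 < n ∧ ∀ p : ℕ, p.Prime →
      (1 + 𝔞.sup (fun a => a.factorization p)) ∣ n.factorization p})
    (k₁ k₂ : ℕ) (hk₁ : k₁ ∈ D) (hk₂ : k₂ ∈ D) (hne : k₁ ≠ k₂) :
    Disjoint (𝔞.image (fun a => k₁ * a)) (𝔞.image (fun a => k₂ * a)) := by
  subst hD
  obtain ⟨hk₁pos, hk₁μ⟩ := hk₁
  obtain ⟨hk₂pos, hk₂μ⟩ := hk₂
  rw [Finset.disjoint_left]
  rintro _ hx₁ hx₂
  obtain ⟨a₁, ha₁, rfl⟩ := Finset.mem_image.mp hx₁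
  obtain ⟨a₂, ha₂, heq⟩ := Finset.mem_image.mp hx₂
  exact hne <| Nat.eq_of_mul_eq_mul_of_factorization_dvd_of_lt _ hk₁pos.ne' hk₂pos.ne'
    (hpos a₁ ha₁).ne' (hpos a₂ ha₂).ne' hk₁μ hk₂μ
    (fun p _ => Finset.lt_one_add_sup (·.factorization p) ha₁)
    (fun p _ => Finset.lt_one_add_sup (·.factorization p) ha₂) heq.symm

theorem dilations_disjoint
    (𝔞 : Finset ℕ) (h𝔞 : 𝔞.Nonempty) (hpos : ∀ a ∈ 𝔞, 0 < a)
    (D : Set ℕ)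
    (hD : D = {n : ℕ | 0 < n ∧ ∀ p : ℕ, p.Prime →
      (1 + 𝔞.sup (fun a => a.factorization p)) ∣ n.factorization p})
    (k₁ k₂ : ℕ) (hk₁ : k₁ ∈ D) (hk₂ : k₂ ∈ D) (hne : k₁ ≠ k₂) :
    Disjoint (𝔞.image (fun a => k₁ * a)) (𝔞.image (fun a => k₂ * a)) :=
  dilations_disjoint_general 𝔞 hpos D hD k₁ k₂ hk₁ hk₂ hne
end

section
/- Let 𝔞_1 ⊂ 𝔞_2 ⊂ ⋯ ⊂ 𝔞_ℓ =: 𝔞 be finite nonempty sets of positive integers, let M := lcm{ a : a ∈ 𝔞 }, δ := (∑_{d | M} 1/d)^{−1}, and for i = 1,…,ℓ let r_i := #R_i where R_i := { ∑_{a ∈ 𝔞_i} t_a/a : t_a ∈ {0,1} }. With the convention 1/max(𝔞_{ℓ+1}) := 0, one has limsup_{N→∞} log(#𝔈_N)/N ≤ log 2 − δ · ∑_{i=1}^{ℓ} (1/max(𝔞_i) − 1/max(𝔞_{i+1})) · log( 2^{#𝔞_i} / r_i ). -/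
open Finset

/-!
Call `v` a high power of `M` if every prime of `v` divides `M` and `ν_p(v)` is a multiple of
`ν_p(M) + 1`. If `v` is a high power, `m` is coprime to `M` and `a ∣ M`, then `v * m * a`
determines `v` and `m`. Hence, for a finite set `W` of high powers, the sets `v * m * 𝔞ᵢ` with
`v ∈ W`, `m` coprime to `M` and `N / max 𝔞ᵢ₊₁ < v * m ≤ N / max 𝔞ᵢ` are pairwise disjoint
subsets of `[1, N]`. A subset sum of reciprocals over `[1, N]` splits into independent choices on
these blocks and on the rest, and a block `k * 𝔞ᵢ` offers only `rᵢ` values instead of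
`2 ^ #𝔞ᵢ`. Counting the admissible `m` gives about
`(φ M / M) * (∑_{v ∈ W} 1 / v) * N * (1 / max 𝔞ᵢ - 1 / max 𝔞ᵢ₊₁)` blocks at level `i`.

It remains to make `(φ M / M) * ∑_{v ∈ W} 1 / v` close to `δ`. Every `n` is `d * v * m` with
`d ∣ M`, `v` a high power and `m` coprime to `M`, so the harmonic sum `H_X` is at most
`(∑_{d ∣ M} 1 / d) * (∑_{v ≤ X} 1 / v) * (∑_{m ≤ X} 1 / m)`, and the last factor is
`(φ M / M) * H_X + O(1)`; let `X → ∞`.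
-/

open Filter Topology Pointwise

namespace EgyptianFractions

/-! ### Subset sums of reciprocals -/

def reciprocalSums (S : Finset ℕ) : Finset ℚ :=
  S.powerset.image fun s : Finset ℕ => ∑ n ∈ s, (1 : ℚ) / (n : ℚ)

noncomputable def reciprocalSumsDefect (S : Finset ℕ) : ℝ :=
  Real.log (2 ^ #S / #(reciprocalSums S))

theorem card_reciprocalSums_pos (S : Finset ℕ) : 0 < #(reciprocalSums S) :=
  card_pos.2 ⟨0, mem_image.2 ⟨∅, empty_mem_powerset S, sum_empty⟩⟩

theorem card_reciprocalSums_le (S : Finset ℕ) : #(reciprocalSums S) ≤ 2 ^ #S :=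
  card_image_le.trans (card_powerset S).le

theorem reciprocalSumsDefect_eq (S : Finset ℕ) :
    reciprocalSumsDefect S = #S * Real.log 2 - Real.log #(reciprocalSums S) := by
  rw [reciprocalSumsDefect, Real.log_div (by positivity)
    (by exact_mod_cast (card_reciprocalSums_pos S).ne'), Real.log_pow]

theorem reciprocalSumsDefect_nonneg (S : Finset ℕ) : 0 ≤ reciprocalSumsDefect S := by
  refine Real.log_nonneg ((one_le_div (by exact_mod_cast card_reciprocalSums_pos S)).2 ?_)
  exact_mod_cast card_reciprocalSums_le S

theorem reciprocalSums_union_subset (S T : Finset ℕ) :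
    reciprocalSums (S ∪ T) ⊆ reciprocalSums S + reciprocalSums T := by
  intro q hq
  obtain ⟨t, ht, rfl⟩ := mem_image.1 hq
  rw [← sum_inter_add_sum_sdiff t S]
  refine add_mem_add (mem_image_of_mem _ (mem_powerset.2 inter_subset_right))
    (mem_image_of_mem _ (mem_powerset.2 fun n hn => ?_))
  rw [Finset.mem_sdiff] at hn
  exact (mem_union.1 (mem_powerset.1 ht hn.1)).resolve_left hn.2

theorem card_reciprocalSums_biUnion_le {ι : Type*} [DecidableEq ι] (I : Finset ι)
    (B : ι → Finset ℕ) :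
    #(reciprocalSums (I.biUnion B)) ≤ ∏ j ∈ I, #(reciprocalSums (B j)) := by
  induction I using Finset.induction_on with
  | empty => simp [reciprocalSums]
  | insert j I hj ih =>
    rw [biUnion_insert, prod_insert hj]
    exact (card_le_card (reciprocalSums_union_subset _ _)).trans
      (card_add_le.trans (Nat.mul_le_mul_left _ ih))

theorem card_reciprocalSums_image_mul {k : ℕ} (hk : k ≠ 0) (S : Finset ℕ) :
    #(reciprocalSums (S.image (k * ·))) = #(reciprocalSums S) := by
  have hinj : Function.Injective (k * ·) := mul_right_injective₀ hk
  have : reciprocalSums (S.image (k * ·)) = (reciprocalSums S).image (· / (k : ℚ)) := by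
    rw [reciprocalSums, powerset_image, image_image, reciprocalSums, image_image]
    refine image_congr fun s _ => ?_
    simp [sum_image hinj.injOn, div_eq_mul_inv, mul_comm, mul_sum]
  rw [this, card_image_of_injective _ fun x y => (div_left_inj' (by exact_mod_cast hk)).1]

theorem reciprocalSumsDefect_image_mul {k : ℕ} (hk : k ≠ 0) (S : Finset ℕ) :
    reciprocalSumsDefect (S.image (k * ·)) = reciprocalSumsDefect S := by
  rw [reciprocalSumsDefect, reciprocalSumsDefect, card_reciprocalSums_image_mul hk,
    card_image_of_injective _ (mul_right_injective₀ hk)]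

theorem log_card_reciprocalSums_le {ι : Type*} [DecidableEq ι] {U : Finset ℕ} {I : Finset ι}
    {B : ι → Finset ℕ} (hBU : ∀ j ∈ I, B j ⊆ U) (hB : (I : Set ι).PairwiseDisjoint B) :
    Real.log #(reciprocalSums U) ≤ #U * Real.log 2 - ∑ j ∈ I, reciprocalSumsDefect (B j) := by
  set V := I.biUnion B
  have hVU : V ⊆ U := biUnion_subset.2 hBU
  have hcard : #(reciprocalSums U) ≤ (∏ j ∈ I, #(reciprocalSums (B j))) * 2 ^ (#U - #V) := by
    have h := card_le_card (reciprocalSums_union_subset V (U \ V))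
    rw [union_sdiff_of_subset hVU] at h
    rw [← card_sdiff_of_subset hVU]
    exact h.trans (card_add_le.trans
      (Nat.mul_le_mul (card_reciprocalSums_biUnion_le I B) (card_reciprocalSums_le _)))
  have hpos : ∀ j ∈ I, (0 : ℝ) < #(reciprocalSums (B j)) := fun j _ => by
    exact_mod_cast card_reciprocalSums_pos _
  calc Real.log #(reciprocalSums U)
      ≤ Real.log (((∏ j ∈ I, #(reciprocalSums (B j))) * 2 ^ (#U - #V) : ℕ) : ℝ) :=
        Real.log_le_log (by exact_mod_cast card_reciprocalSums_pos U) (by exact_mod_cast hcard)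
    _ = ∑ j ∈ I, Real.log #(reciprocalSums (B j)) + (#U - ∑ j ∈ I, #(B j)) * Real.log 2 := by
        rw [Nat.cast_mul, Nat.cast_prod, Real.log_mul (prod_pos hpos).ne' (by positivity),
          Real.log_prod fun j hj => (hpos j hj).ne', Nat.cast_pow, Nat.cast_ofNat, Real.log_pow,
          Nat.cast_sub (card_le_card hVU), card_biUnion hB, Nat.cast_sum]
    _ = #U * Real.log 2 - ∑ j ∈ I, reciprocalSumsDefect (B j) := by
        simp only [reciprocalSumsDefect_eq, sum_sub_distrib, ← sum_mul]
        push_cast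
        ring

/-! ### High powers of `M` -/

def IsHighPower (M v : ℕ) : Prop :=
  ∀ p ∈ v.primeFactors, p ∣ M ∧ (M.factorization p + 1) ∣ v.factorization p

instance (M : ℕ) : DecidablePred (IsHighPower M) := fun _ => decidableDforallFinset

namespace IsHighPower

variable {M v w m a : ℕ}

theorem one (M : ℕ) : IsHighPower M 1 := by simp [IsHighPower]

theorem dvd_factorization (hv : IsHighPower M v) (p : ℕ) :
    (M.factorization p + 1) ∣ v.factorization p := by
  by_cases hp : p ∈ v.primeFactors
  · exact (hv p hp).2
  · rw [← Nat.support_factorization, Finsupp.notMem_support_iff] at hp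
    rw [hp]
    exact dvd_zero _

theorem factorization_eq_zero (hv : IsHighPower M v) {p : ℕ} (hp : ¬ p ∣ M) :
    v.factorization p = 0 := by
  by_contra h
  exact hp (hv p (Nat.support_factorization v ▸ Finsupp.mem_support_iff.2 h)).1

theorem mul (hv : IsHighPower M v) (hw : IsHighPower M w) : IsHighPower M (v * w) := by
  rcases eq_or_ne v 0 with rfl | hv0
  · simp [IsHighPower]
  rcases eq_or_ne w 0 with rfl | hw0
  · simp [IsHighPower]
  intro p hp
  rw [Nat.factorization_mul hv0 hw0, Finsupp.add_apply]
  refine ⟨?_, dvd_add (hv.dvd_factorization p) (hw.dvd_factorization p)⟩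
  rcases Finset.mem_union.1 (Nat.primeFactors_mul hv0 hw0 ▸ hp) with h | h
  exacts [(hv p h).1, (hw p h).1]

theorem prime_pow {p : ℕ} (hp : p.Prime) (hpM : p ∣ M) (k : ℕ) :
    IsHighPower M (p ^ ((M.factorization p + 1) * k)) := by
  intro q hq
  obtain ⟨hq, hqp, -⟩ := Nat.mem_primeFactors.1 hq
  obtain rfl := (Nat.prime_dvd_prime_iff_eq hq hp).1 (hq.dvd_of_dvd_pow hqp)
  rw [hp.factorization_pow, Finsupp.single_eq_same]
  exact ⟨hpM, dvd_mul_right _ _⟩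

theorem factorization_eq_of_mul (hM : M ≠ 0) (hv : IsHighPower M v) (hm : M.Coprime m)
    (ha : a ∣ M) (hv0 : v ≠ 0) (hm0 : m ≠ 0) (p : ℕ) :
    v.factorization p = (if p ∣ M then
        (M.factorization p + 1) * ((v * m * a).factorization p / (M.factorization p + 1))
      else 0) ∧
    m.factorization p = if p ∣ M then 0 else (v * m * a).factorization p := by
  have ha0 : a ≠ 0 := ne_zero_of_dvd_ne_zero hM ha
  have hn : (v * m * a).factorization p =
      v.factorization p + m.factorization p + a.factorization p := by
    simp [Nat.factorization_mul, *]
  by_cases hp : p.Prime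
  swap
  · simp [Nat.factorization_eq_zero_of_not_prime _ hp]
  split_ifs with hpM
  · have hmp : m.factorization p = 0 := Nat.factorization_eq_zero_of_not_dvd
      ((Nat.Prime.coprime_iff_not_dvd hp).1 (hm.coprime_dvd_left hpM))
    have hap : a.factorization p < M.factorization p + 1 :=
      Nat.lt_succ_of_le ((Nat.factorization_le_iff_dvd ha0 hM).2 ha p)
    obtain ⟨s, hs⟩ := hv.dvd_factorization p
    rw [hn, hmp, hs, add_zero, Nat.mul_add_div (Nat.succ_pos _), Nat.div_eq_of_lt hap, add_zero]
    exact ⟨rfl, rfl⟩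
  · have hap : a.factorization p = 0 :=
      Nat.factorization_eq_zero_of_not_dvd fun h => hpM (h.trans ha)
    rw [hn, hap, hv.factorization_eq_zero hpM]
    exact ⟨rfl, by ring⟩

theorem eq_of_mul_eq {v' m' a' : ℕ} (hM : M ≠ 0) (hv : IsHighPower M v)
    (hv' : IsHighPower M v') (hm : M.Coprime m) (hm' : M.Coprime m') (ha : a ∣ M)
    (ha' : a' ∣ M) (hv0 : v ≠ 0) (hv0' : v' ≠ 0) (hm0 : m ≠ 0) (hm0' : m' ≠ 0)
    (h : v * m * a = v' * m' * a') : v = v' ∧ m = m' := by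
  have hf := hv.factorization_eq_of_mul hM hm ha hv0 hm0
  have hf' := hv'.factorization_eq_of_mul hM hm' ha' hv0' hm0'
  rw [← h] at hf'
  exact ⟨Nat.eq_of_factorization_eq hv0 hv0' fun p => (hf p).1.trans (hf' p).1.symm,
    Nat.eq_of_factorization_eq hm0 hm0' fun p => (hf p).2.trans (hf' p).2.symm⟩

end IsHighPower

theorem exists_dvd_isHighPower_coprime_eq_mul (M : ℕ) {n : ℕ} (hn : n ≠ 0) :
    ∃ d v m, d ∣ M ∧ IsHighPower M v ∧ M.Coprime m ∧ n = d * v * m := by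
  induction n using Nat.recOnPosPrimePosCoprime with
  | zero => exact absurd rfl hn
  | one => exact ⟨1, 1, 1, one_dvd M, .one M, Nat.coprime_one_right M, rfl⟩
  | prime_pow p k hp _ =>
    by_cases hpM : p ∣ M
    · set e := M.factorization p + 1
      refine ⟨p ^ (k % e), p ^ (e * (k / e)), 1, ?_, .prime_pow hp hpM _,
        Nat.coprime_one_right M, ?_⟩
      · refine (pow_dvd_pow p ?_).trans (Nat.ordProj_dvd M p)
        exact Nat.lt_succ_iff.1 (Nat.mod_lt k (Nat.succ_pos _))
      · rw [mul_one, ← pow_add, Nat.mod_add_div]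
    · exact ⟨1, 1, p ^ k, one_dvd M, .one M,
        (Nat.Coprime.pow_left k ((Nat.Prime.coprime_iff_not_dvd hp).2 hpM)).symm, by ring⟩
  | coprime a b ha hb hab iha ihb =>
    obtain ⟨d₁, v₁, m₁, hd₁, hv₁, hm₁, rfl⟩ := iha (by omega)
    obtain ⟨d₂, v₂, m₂, hd₂, hv₂, hm₂, rfl⟩ := ihb (by omega)
    have hd : d₁.Coprime d₂ :=
      (hab.coprime_dvd_left (dvd_mul_of_dvd_left (dvd_mul_right _ _) _)).coprime_dvd_right
        (dvd_mul_of_dvd_left (dvd_mul_right _ _) _)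
    exact ⟨d₁ * d₂, v₁ * v₂, m₁ * m₂, hd.mul_dvd_of_dvd_of_dvd hd₁ hd₂, hv₁.mul hv₂,
      hm₁.mul_right hm₂, by ring⟩

theorem disjoint_image_mul_of_ne {M v v' m m' : ℕ} (hM : M ≠ 0) (hv : IsHighPower M v)
    (hv' : IsHighPower M v') (hm : M.Coprime m) (hm' : M.Coprime m') (hv0 : v ≠ 0)
    (hv0' : v' ≠ 0) (hm0 : m ≠ 0) (hm0' : m' ≠ 0) {S S' : Finset ℕ} (hS : ∀ a ∈ S, a ∣ M)
    (hS' : ∀ a ∈ S', a ∣ M) (hne : (v, m) ≠ (v', m')) :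
    Disjoint (S.image (v * m * ·)) (S'.image (v' * m' * ·)) := by
  refine disjoint_left.2 fun x hx hx' => hne ?_
  obtain ⟨a, ha, rfl⟩ := mem_image.1 hx
  obtain ⟨a', ha', h⟩ := mem_image.1 hx'
  obtain ⟨rfl, rfl⟩ :=
    hv.eq_of_mul_eq hM hv' hm hm' (hS a ha) (hS' a' ha') hv0 hv0' hm0 hm0' h.symm
  rfl

/-! ### Density of the high powers -/

theorem sum_one_div_le_of_subset_mul {s A B : Finset ℕ} (h : s ⊆ A * B) :
    ∑ n ∈ s, (1 : ℝ) / n ≤ (∑ a ∈ A, (1 : ℝ) / a) * ∑ b ∈ B, (1 : ℝ) / b := by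
  rw [sum_mul_sum, ← sum_product']
  refine (sum_le_sum_of_subset_of_nonneg h fun _ _ _ => by positivity).trans ?_
  rw [mul_def]
  refine (sum_image_le_of_nonneg fun _ _ => by positivity).trans_eq
    (sum_congr rfl fun p _ => ?_)
  rw [Nat.cast_mul, one_div_mul_one_div]

theorem Icc_subset_divisors_mul_isHighPower_mul_coprime {M : ℕ} (hM : M ≠ 0) (X : ℕ) :
    Icc 1 X ⊆ M.divisors * {v ∈ Icc 1 X | IsHighPower M v} * {m ∈ Icc 1 X | M.Coprime m} := by
  intro n hn
  obtain ⟨hn1, hnX⟩ := mem_Icc.1 hn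
  obtain ⟨d, v, m, hd, hv, hm, rfl⟩ := exists_dvd_isHighPower_coprime_eq_mul M (by omega : n ≠ 0)
  have hv0 : v ≠ 0 := by rintro rfl; simp at hn1
  have hm0 : m ≠ 0 := by rintro rfl; simp at hn1
  refine mem_mul.2 ⟨d * v, mem_mul.2 ⟨d, Nat.mem_divisors.2 ⟨hd, hM⟩, v, ?_, rfl⟩, m, ?_, rfl⟩
  · refine mem_filter.2 ⟨mem_Icc.2 ⟨Nat.one_le_iff_ne_zero.2 hv0, le_trans ?_ hnX⟩, hv⟩
    exact Nat.le_of_dvd (by omega) ⟨d * m, by ring⟩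
  · refine mem_filter.2 ⟨mem_Icc.2 ⟨Nat.one_le_iff_ne_zero.2 hm0, le_trans ?_ hnX⟩, hm⟩
    exact Nat.le_of_dvd (by omega) ⟨d * v, by ring⟩

theorem sum_one_div_filter_coprime_Ico_le (M : ℕ) {a : ℕ} (ha : 0 < a) :
    ∑ m ∈ {m ∈ Ico a (a + M) | M.Coprime m}, (1 : ℝ) / m ≤ M.totient / a := by
  refine (sum_le_card_nsmul _ _ (1 / a : ℝ) fun m hm => ?_).trans_eq ?_
  · have ham : a ≤ m := (mem_Ico.1 (mem_filter.1 hm).1).1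
    exact one_div_le_one_div_of_le (by exact_mod_cast ha) (by exact_mod_cast ham)
  · rw [Nat.filter_coprime_Ico_eq_totient, nsmul_eq_mul, mul_one_div]

theorem sum_one_div_filter_coprime_le {M : ℕ} (hM : M ≠ 0) (X : ℕ) :
    ∑ m ∈ {m ∈ Icc 1 X | M.Coprime m}, (1 : ℝ) / m ≤ M.totient * (1 + harmonic X / M) := by
  have hM' : (0 : ℝ) < M := by exact_mod_cast Nat.pos_of_ne_zero hM
  have hblocks : ∀ q : ℕ, ∑ m ∈ {m ∈ Ico 1 (1 + (q + 1) * M) | M.Coprime m}, (1 : ℝ) / m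
      ≤ M.totient * (1 + harmonic q / M) := by
    intro q
    induction q with
    | zero => simpa using sum_one_div_filter_coprime_Ico_le M one_pos
    | succ q ih =>
      rw [← Ico_union_Ico_eq_Ico (b := 1 + (q + 1) * M) (by omega) (by nlinarith), filter_union,
        sum_union (disjoint_filter_filter (Ico_disjoint_Ico_consecutive _ _ _)),
        show 1 + (q + 1 + 1) * M = 1 + (q + 1) * M + M by ring]
      have hblock := sum_one_div_filter_coprime_Ico_le M (a := 1 + (q + 1) * M) (by omega)
      have hlast : (M.totient : ℝ) / (1 + (q + 1) * M) ≤ M.totient / ((q + 1) * M) :=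
        div_le_div_of_nonneg_left (by positivity) (by positivity) (by linarith)
      refine (add_le_add ih hblock).trans ?_
      rw [harmonic_succ]
      push_cast
      calc _ ≤ (M.totient : ℝ) * (1 + (harmonic q : ℝ) / M) + M.totient / ((q + 1) * M) := by
            gcongr
        _ = _ := by field_simp; ring
  refine le_trans (sum_le_sum_of_subset_of_nonneg ?_ fun _ _ _ => by positivity) (hblocks X)
  refine filter_subset_filter _ fun m hm => ?_
  rw [mem_Icc] at hm
  rw [mem_Ico]
  constructor
  · omega
  · nlinarith [Nat.pos_of_ne_zero hM]

theorem exists_le_harmonic (c : ℝ) : ∃ X : ℕ, c ≤ harmonic X := by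
  refine ⟨⌈Real.exp c⌉₊, le_trans ?_ (log_add_one_le_harmonic _)⟩
  rw [Real.le_log_iff_exp_le (by positivity)]
  push_cast
  linarith [Nat.le_ceil (Real.exp c)]

theorem exists_le_totient_div_mul_sum_isHighPower {M : ℕ} (hM : M ≠ 0) {β : ℝ}
    (hβ : β < (∑ d ∈ M.divisors, (1 : ℝ) / d)⁻¹) :
    ∃ W : Finset ℕ, (∀ v ∈ W, v ≠ 0 ∧ IsHighPower M v) ∧
      β ≤ M.totient / M * ∑ v ∈ W, (1 : ℝ) / v := by
  set D := ∑ d ∈ M.divisors, (1 : ℝ) / d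
  have hD : 0 < D := sum_pos (fun d hd => by have := Nat.pos_of_mem_divisors hd; positivity)
    ⟨1, Nat.one_mem_divisors.2 hM⟩
  rcases le_or_gt β 0 with hβ0 | hβ0
  · exact ⟨∅, by simp, by simpa using hβ0⟩
  have hβD : β * D < 1 := by rwa [← lt_mul_inv_iff₀ hD, one_mul]
  obtain ⟨X, hX⟩ := exists_le_harmonic (β * D * M / (1 - β * D))
  set W := {v ∈ Icc 1 X | IsHighPower M v}
  refine ⟨W, fun v hv => ⟨by have := (mem_Icc.1 (mem_filter.1 hv).1).1; omega,
    (mem_filter.1 hv).2⟩, ?_⟩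
  set S := ∑ v ∈ W, (1 : ℝ) / v
  set H : ℝ := (harmonic X : ℝ)
  have hH : H = ∑ n ∈ Icc 1 X, (1 : ℝ) / n := by simp [H, harmonic_eq_sum_Icc]
  have hHS : H ≤ D * S * (M.totient * (1 + H / M)) :=
    calc H ≤ (∑ k ∈ M.divisors * W, (1 : ℝ) / k) *
          ∑ m ∈ {m ∈ Icc 1 X | M.Coprime m}, (1 : ℝ) / m :=
          hH ▸ sum_one_div_le_of_subset_mul (Icc_subset_divisors_mul_isHighPower_mul_coprime hM X)
      _ ≤ D * S * (M.totient * (1 + H / M)) := by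
          gcongr
          · exact sum_one_div_le_of_subset_mul subset_rfl
          · exact sum_one_div_filter_coprime_le hM X
  have hDH : 0 < D * (M + H) := by
    have : 0 ≤ H := by
      rw [hH]
      positivity
    positivity
  refine le_of_mul_le_mul_right ?_ hDH
  calc β * (D * (M + H)) ≤ H := by
        rw [div_le_iff₀ (by linarith)] at hX
        nlinarith
    _ ≤ _ := hHS.trans_eq (by field_simp)

/-! ### Counting integers coprime to `M` -/

theorem card_filter_coprime_Ico_add_mul (M u q : ℕ) :
    #{x ∈ Ico u (u + q * M) | M.Coprime x} = q * M.totient := by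
  induction q with
  | zero => simp
  | succ q ih =>
    rw [← Ico_union_Ico_eq_Ico (b := u + q * M) (by omega) (by nlinarith), filter_union,
      card_union_of_disjoint (disjoint_filter_filter (Ico_disjoint_Ico_consecutive _ _ _)), ih,
      show u + (q + 1) * M = u + q * M + M by ring, Nat.filter_coprime_Ico_eq_totient]
    ring

theorem le_card_filter_coprime_Ioc {M : ℕ} (hM : M ≠ 0) (u w : ℕ) :
    (M.totient / M : ℝ) * ((w : ℝ) - u) - M.totient ≤ #{m ∈ Ioc u w | M.Coprime m} := by
  set q := (w - u) / M
  have hqM : q * M ≤ w - u := Nat.div_mul_le_self _ _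
  have hcount : q * M.totient ≤ #{m ∈ Ioc u w | M.Coprime m} := by
    rw [← card_filter_coprime_Ico_add_mul M (u + 1) q]
    refine card_le_card (filter_subset_filter _ fun m hm => ?_)
    rw [mem_Ico] at hm
    rw [mem_Ioc]
    omega
  have hwu : (w : ℝ) - u - M ≤ q * M := by
    have h : ((w - u : ℕ) : ℝ) < q * M + M := by
      exact_mod_cast Nat.lt_div_mul_add (a := w - u) (Nat.pos_of_ne_zero hM)
    have : (w : ℝ) - u ≤ ((w - u : ℕ) : ℝ) := by
      rcases le_total u w with h | h
      · rw [Nat.cast_sub h]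
      · rw [Nat.sub_eq_zero_of_le h]; simp [h]
    linarith
  calc (M.totient / M : ℝ) * ((w : ℝ) - u) - M.totient
      = (M.totient / M : ℝ) * ((w : ℝ) - u - M) := by field_simp
    _ ≤ (M.totient / M : ℝ) * (q * M) := by gcongr
    _ = ((q * M.totient : ℕ) : ℝ) := by push_cast; field_simp
    _ ≤ _ := by exact_mod_cast hcount

theorem le_sum_card_filter_coprime_Ioc_div {M : ℕ} (hM : M ≠ 0) (W : Finset ℕ) (b b' : ℕ) :
    (M.totient / M * ∑ v ∈ W, (1 : ℝ) / v) * ((b : ℝ) - b') - #W * (M.totient / M + M.totient)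
      ≤ ∑ v ∈ W, (#{m ∈ Ioc (b' / v) (b / v) | M.Coprime m} : ℝ) := by
  rw [mul_sum, sum_mul, ← nsmul_eq_mul, ← sum_const, ← sum_sub_distrib]
  refine sum_le_sum fun v _ => le_trans ?_ (le_card_filter_coprime_Ioc hM _ _)
  have hb : (b : ℝ) / v - 1 ≤ ((b / v : ℕ) : ℝ) := by
    rw [← Nat.floor_div_eq_div (K := ℝ)]
    exact (Nat.sub_one_lt_floor _).le
  have hb' : ((b' / v : ℕ) : ℝ) ≤ b' / v := Nat.cast_div_le
  calc M.totient / M * (1 / v) * ((b : ℝ) - b') - (M.totient / M + M.totient)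
      = M.totient / M * ((b : ℝ) / v - 1 - b' / v) - M.totient := by ring
    _ ≤ M.totient / M * (((b / v : ℕ) : ℝ) - ((b' / v : ℕ) : ℝ)) - M.totient := by gcongr

/-! ### Packing blocks into `[1, N]` -/

theorem mem_Ioc_div_iff {v m b b' : ℕ} (hv : v ≠ 0) :
    m ∈ Ioc (b' / v) (b / v) ↔ b' < v * m ∧ v * m ≤ b := by
  rw [mem_Ioc, Nat.div_lt_iff_lt_mul (Nat.pos_of_ne_zero hv),
    Nat.le_div_iff_mul_le (Nat.pos_of_ne_zero hv), mul_comm m v]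

theorem log_card_egyptianFractions_le_of_blocks {M N ℓ : ℕ} (hM : M ≠ 0) {S : ℕ → Finset ℕ}
    {b : ℕ → ℕ} (hS : ∀ i ∈ Icc 1 ℓ, ∀ a ∈ S i, 0 < a ∧ a ∣ M)
    (hbS : ∀ i ∈ Icc 1 ℓ, ∀ a ∈ S i, b i * a ≤ N) (hb : AntitoneOn b (Icc 1 (ℓ + 1)))
    {W : Finset ℕ} (hW : ∀ v ∈ W, v ≠ 0 ∧ IsHighPower M v) :
    Real.log #(egyptianFractions N) ≤ N * Real.log 2 - ∑ i ∈ Icc 1 ℓ,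
      ((∑ v ∈ W, #{m ∈ Ioc (b (i + 1) / v) (b i / v) | M.Coprime m} : ℕ) : ℝ) *
        reciprocalSumsDefect (S i) := by
  set window := fun i v => {m ∈ Ioc (b (i + 1) / v) (b i / v) | M.Coprime m}
  set Λ := (Icc 1 ℓ).sigma fun i => W.sigma fun v => window i v
  have hΛ : ∀ t ∈ Λ, t.1 ∈ Icc 1 ℓ ∧ t.2.1 ≠ 0 ∧ IsHighPower M t.2.1 ∧ t.2.2 ≠ 0 ∧
      M.Coprime t.2.2 ∧ b (t.1 + 1) < t.2.1 * t.2.2 ∧ t.2.1 * t.2.2 ≤ b t.1 := by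
    rintro ⟨i, v, m⟩ ht
    simp only [Λ, window, mem_sigma, mem_filter] at ht
    obtain ⟨hi, hv, hwindow, hm⟩ := ht
    obtain ⟨hv0, hvW⟩ := hW v hv
    obtain ⟨hlo, hhi⟩ := (mem_Ioc_div_iff hv0).1 hwindow
    exact ⟨hi, hv0, hvW, right_ne_zero_of_mul ((Nat.zero_le _).trans_lt hlo).ne', hm, hlo, hhi⟩
  have hb' : ∀ i ∈ Icc 1 ℓ, ∀ j ∈ Icc 1 ℓ, i < j → b j ≤ b (i + 1) := fun i hi j hj hij => by
    simp only [mem_Icc] at hi hj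
    exact hb (by simp; omega) (by simp; omega) hij
  set block := fun t : (_ : ℕ) × (_ : ℕ) × ℕ => (S t.1).image (t.2.1 * t.2.2 * ·)
  have hblock : ∀ t ∈ Λ, block t ⊆ Icc 1 N := by
    intro t ht x hx
    obtain ⟨hi, hv0, -, hm0, -, -, hle⟩ := hΛ t ht
    obtain ⟨a, ha, rfl⟩ := mem_image.1 hx
    obtain ⟨ha0, -⟩ := hS _ hi a ha
    refine mem_Icc.2 ⟨Nat.one_le_iff_ne_zero.2 (by positivity), ?_⟩
    exact (Nat.mul_le_mul_right a hle).trans (hbS _ hi a ha)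
  have hdisj : (Λ : Set _).PairwiseDisjoint block := by
    rintro ⟨i, v, m⟩ ht ⟨i', v', m'⟩ ht' hne
    obtain ⟨hi, hv0, hv, hm0, hm, hlo, hhi⟩ := hΛ _ ht
    obtain ⟨hi', hv0', hv', hm0', hm', hlo', hhi'⟩ := hΛ _ ht'
    by_cases hvm : (v, m) = (v', m')
    · obtain ⟨rfl, rfl⟩ := Prod.mk.inj hvm
      exfalso
      rcases lt_trichotomy i i' with h | rfl | h
      · exact absurd (hhi'.trans (hb' i hi i' hi' h)) (not_le.2 hlo)
      · exact hne rfl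
      · exact absurd (hhi.trans (hb' i' hi' i hi h)) (not_le.2 hlo')
    · exact disjoint_image_mul_of_ne hM hv hv' hm hm' hv0 hv0' hm0 hm0'
        (fun a ha => (hS i hi a ha).2) (fun a ha => (hS i' hi' a ha).2) hvm
  have hdefect : ∑ t ∈ Λ, reciprocalSumsDefect (block t) = ∑ i ∈ Icc 1 ℓ,
      ((∑ v ∈ W, #(window i v) : ℕ) : ℝ) * reciprocalSumsDefect (S i) := by
    rw [sum_congr rfl fun t ht => reciprocalSumsDefect_image_mul
      (mul_ne_zero (hΛ t ht).2.1 (hΛ t ht).2.2.2.1) (S t.1)]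
    simp [Λ, sum_sigma, ← card_sigma]
  have h := log_card_reciprocalSums_le hblock hdisj
  rwa [hdefect, Nat.card_Icc, Nat.add_sub_cancel] at h

/-! ### The chain -/

noncomputable def chainGap (𝔞 : ℕ → Finset ℕ) (ℓ i : ℕ) : ℝ :=
  (1 : ℝ) / (((𝔞 i).sup id : ℕ) : ℝ) -
    (if i < ℓ then (1 : ℝ) / (((𝔞 (i + 1)).sup id : ℕ) : ℝ) else 0)

def levelBound (𝔞 : ℕ → Finset ℕ) (ℓ N i : ℕ) : ℕ :=
  if i ≤ ℓ then N / (𝔞 i).sup id else 0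

section Chain

variable {ℓ M : ℕ} {𝔞 : ℕ → Finset ℕ}

theorem subset_of_le_of_chain (h : ∀ i : ℕ, 1 ≤ i → i < ℓ → 𝔞 i ⊆ 𝔞 (i + 1)) {i j : ℕ}
    (hi : 1 ≤ i) (hij : i ≤ j) (hj : j ≤ ℓ) : 𝔞 i ⊆ 𝔞 j := by
  induction j, hij using Nat.le_induction with
  | base => rfl
  | succ j hij ih => exact (ih (by omega)).trans (h j (by omega) (by omega))

theorem one_le_sup_id (hne : ∀ i ∈ Icc 1 ℓ, (𝔞 i).Nonempty)
    (hpos : ∀ i ∈ Icc 1 ℓ, ∀ a ∈ 𝔞 i, 0 < a) {i : ℕ} (hi : i ∈ Icc 1 ℓ) :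
    1 ≤ (𝔞 i).sup id := by
  obtain ⟨a, ha⟩ := hne i hi
  exact (hpos i hi a ha).trans_le (le_sup (f := id) ha)

theorem chainGap_nonneg (hne : ∀ i ∈ Icc 1 ℓ, (𝔞 i).Nonempty)
    (hpos : ∀ i ∈ Icc 1 ℓ, ∀ a ∈ 𝔞 i, 0 < a)
    (hmono : MonotoneOn (fun i => (𝔞 i).sup id) (Icc 1 ℓ)) {i : ℕ} (hi : i ∈ Icc 1 ℓ) :
    0 ≤ chainGap 𝔞 ℓ i := by
  rw [chainGap, sub_nonneg]
  split_ifs with h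
  · have hi' : i + 1 ∈ Icc 1 ℓ := by simp at hi ⊢; omega
    exact one_div_le_one_div_of_le (by exact_mod_cast one_le_sup_id hne hpos hi)
      (by exact_mod_cast hmono hi hi' (Nat.le_succ i))
  · positivity

theorem levelBound_mul_le (N : ℕ) {i a : ℕ} (hi : i ≤ ℓ) (ha : a ∈ 𝔞 i) :
    levelBound 𝔞 ℓ N i * a ≤ N := by
  rw [levelBound, if_pos hi]
  exact (Nat.mul_le_mul_left _ (le_sup (f := id) ha)).trans (Nat.div_mul_le_self N _)

theorem antitoneOn_levelBound (hA : ∀ i ∈ Icc 1 ℓ, 1 ≤ (𝔞 i).sup id)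
    (hmono : MonotoneOn (fun i => (𝔞 i).sup id) (Icc 1 ℓ)) (N : ℕ) :
    AntitoneOn (levelBound 𝔞 ℓ N) (Icc 1 (ℓ + 1)) := by
  intro i hi j hj hij
  simp only [coe_Icc, Set.mem_Icc] at hi hj
  by_cases hjℓ : j ≤ ℓ
  · have hi' : i ∈ Icc 1 ℓ := mem_Icc.2 ⟨hi.1, hij.trans hjℓ⟩
    rw [levelBound, levelBound, if_pos hjℓ, if_pos (hij.trans hjℓ)]
    exact Nat.div_le_div_left (hmono hi' (mem_Icc.2 ⟨hj.1, hjℓ⟩) hij) (hA i hi')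
  · rw [levelBound, if_neg hjℓ]
    exact Nat.zero_le _

theorem mul_chainGap_sub_one_le (N : ℕ) {i : ℕ} (hi : i ≤ ℓ) :
    N * chainGap 𝔞 ℓ i - 1 ≤ (levelBound 𝔞 ℓ N i : ℝ) - levelBound 𝔞 ℓ N (i + 1) := by
  have hcur : (N : ℝ) / ((𝔞 i).sup id : ℕ) - 1 ≤ levelBound 𝔞 ℓ N i := by
    rw [levelBound, if_pos hi, ← Nat.floor_div_eq_div (K := ℝ)]
    exact (Nat.sub_one_lt_floor _).le
  have hnext : (levelBound 𝔞 ℓ N (i + 1) : ℝ) ≤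
      N * (if i < ℓ then (1 : ℝ) / (((𝔞 (i + 1)).sup id : ℕ) : ℝ) else 0) := by
    rw [levelBound]
    split_ifs with h₁ h₂ h₂
    · rw [mul_one_div]
      exact Nat.cast_div_le
    · omega
    · omega
    · simp
  rw [chainGap, mul_sub, mul_one_div]
  linarith

theorem exists_log_card_egyptianFractions_le (hM : M ≠ 0)
    (hne : ∀ i ∈ Icc 1 ℓ, (𝔞 i).Nonempty) (hS : ∀ i ∈ Icc 1 ℓ, ∀ a ∈ 𝔞 i, 0 < a ∧ a ∣ M)
    (hmono : MonotoneOn (fun i => (𝔞 i).sup id) (Icc 1 ℓ))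
    {W : Finset ℕ} (hW : ∀ v ∈ W, v ≠ 0 ∧ IsHighPower M v) :
    ∃ C : ℝ, ∀ N : ℕ, Real.log #(egyptianFractions N) ≤ N * (Real.log 2 -
      (M.totient / M * ∑ v ∈ W, (1 : ℝ) / v) *
        ∑ i ∈ Icc 1 ℓ, chainGap 𝔞 ℓ i * reciprocalSumsDefect (𝔞 i)) + C := by
  have hA : ∀ i ∈ Icc 1 ℓ, 1 ≤ (𝔞 i).sup id :=
    fun i hi => one_le_sup_id hne (fun i hi a ha => (hS i hi a ha).1) hi
  set c := M.totient / M * ∑ v ∈ W, (1 : ℝ) / v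
  set K := #W * (M.totient / M + M.totient : ℝ)
  refine ⟨(c + K) * ∑ i ∈ Icc 1 ℓ, reciprocalSumsDefect (𝔞 i), fun N => ?_⟩
  set b := levelBound 𝔞 ℓ N
  have hcount : ∀ i ∈ Icc 1 ℓ, c * (N * chainGap 𝔞 ℓ i) - (c + K) ≤
      ((∑ v ∈ W, #{m ∈ Ioc (b (i + 1) / v) (b i / v) | M.Coprime m} : ℕ) : ℝ) := by
    intro i hi
    have hc : 0 ≤ c := by positivity
    push_cast
    refine le_trans ?_ (le_sum_card_filter_coprime_Ioc_div hM W (b i) (b (i + 1)))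
    nlinarith [mul_chainGap_sub_one_le (𝔞 := 𝔞) N (mem_Icc.1 hi).2]
  refine (log_card_egyptianFractions_le_of_blocks hM hS
    (fun i hi a ha => levelBound_mul_le N (mem_Icc.1 hi).2 ha)
    (antitoneOn_levelBound hA hmono N) hW).trans ?_
  have hsum := sum_le_sum fun i hi =>
    mul_le_mul_of_nonneg_right (hcount i hi) (reciprocalSumsDefect_nonneg (𝔞 i))
  simp only [sub_mul, sum_sub_distrib, mul_assoc, ← mul_sum] at hsum
  linarith

end Chain

/-! ### Limits -/

theorem limsup_div_le_of_le_mul_add {f : ℕ → ℝ} (hf : ∀ N, 0 ≤ f N) {a C : ℝ}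
    (h : ∀ N, f N ≤ N * a + C) : limsup (fun N : ℕ => f N / N) atTop ≤ a := by
  have hlim : Tendsto (fun N : ℕ => a + C / N) atTop (𝓝 a) := by
    simpa using tendsto_const_nhds.add (tendsto_const_div_atTop_nhds_zero_nat C)
  refine (limsup_le_limsup ?_
    (isCoboundedUnder_le_of_le _ fun N => div_nonneg (hf N) N.cast_nonneg)
    hlim.isBoundedUnder_le).trans_eq hlim.limsup_eq
  filter_upwards [eventually_gt_atTop 0] with N hN
  rw [div_le_iff₀ (by exact_mod_cast hN), add_mul, div_mul_cancel₀ _ (by positivity), mul_comm]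
  exact h N

theorem le_sub_mul_of_forall_lt {L a δ s : ℝ} (h : ∀ β < δ, L ≤ a - β * s) :
    L ≤ a - δ * s := by
  have hg : Tendsto (fun β => a - β * s) (𝓝[<] δ) (𝓝 (a - δ * s)) :=
    ((continuous_const.sub (continuous_id.mul continuous_const)).tendsto δ).mono_left
      nhdsWithin_le_nhds
  exact ge_of_tendsto hg (eventually_nhdsWithin_of_forall h)

end EgyptianFractions

open EgyptianFractions in
theorem chains_upper_bound
    (ℓ : ℕ) (hℓ : 1 ≤ ℓ) (𝔞 : ℕ → Finset ℕ)
    (hne : ∀ i ∈ Finset.Icc 1 ℓ, (𝔞 i).Nonempty)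
    (hpos : ∀ i ∈ Finset.Icc 1 ℓ, ∀ a ∈ 𝔞 i, 0 < a)
    (hchain : ∀ i : ℕ, 1 ≤ i → i < ℓ → 𝔞 i ⊂ 𝔞 (i + 1))
    (M : ℕ) (hM : M = (𝔞 ℓ).lcm id)
    (δ : ℝ) (hδ : δ = (∑ d ∈ M.divisors, (1 : ℝ) / d)⁻¹)
    (r : ℕ → ℕ)
    (hr : ∀ i ∈ Finset.Icc 1 ℓ,
      r i = ((𝔞 i).powerset.image
        (fun s : Finset ℕ => ∑ a ∈ s, (1 : ℚ) / (a : ℚ))).card) :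
    Filter.atTop.limsup (fun N : ℕ => Real.log (egyptianFractions N).card / N)
      ≤ Real.log 2 - δ * ∑ i ∈ Finset.Icc 1 ℓ,
          ((1 : ℝ) / (((𝔞 i).sup id : ℕ) : ℝ) -
            (if i < ℓ then (1 : ℝ) / (((𝔞 (i + 1)).sup id : ℕ) : ℝ) else 0)) *
          Real.log ((2 : ℝ) ^ (𝔞 i).card / (r i : ℝ)) := by
  have hsub : ∀ i ∈ Icc 1 ℓ, ∀ j ∈ Icc 1 ℓ, i ≤ j → 𝔞 i ⊆ 𝔞 j := fun i hi j hj hij =>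
    subset_of_le_of_chain (fun k hk hkℓ => (hchain k hk hkℓ).subset) (mem_Icc.1 hi).1 hij
      (mem_Icc.1 hj).2
  have hℓ' : ℓ ∈ Icc 1 ℓ := mem_Icc.2 ⟨hℓ, le_rfl⟩
  have hM0 : M ≠ 0 := by
    rw [hM, Ne, Finset.lcm_eq_zero_iff]
    exact fun ⟨a, ha, h0⟩ => (hpos ℓ hℓ' a ha).ne' h0
  have hS : ∀ i ∈ Icc 1 ℓ, ∀ a ∈ 𝔞 i, 0 < a ∧ a ∣ M := fun i hi a ha =>
    ⟨hpos i hi a ha, hM ▸ dvd_lcm (hsub i hi ℓ hℓ' (mem_Icc.1 hi).2 ha)⟩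
  have hmono : MonotoneOn (fun i => (𝔞 i).sup id) (Icc 1 ℓ) := fun i hi j hj hij =>
    sup_mono (hsub i hi j hj hij)
  have hsum_nonneg : 0 ≤ ∑ i ∈ Icc 1 ℓ, chainGap 𝔞 ℓ i * reciprocalSumsDefect (𝔞 i) :=
    sum_nonneg fun i hi => mul_nonneg (chainGap_nonneg hne hpos hmono hi)
      (reciprocalSumsDefect_nonneg _)
  suffices h : ∀ β < δ, limsup (fun N : ℕ => Real.log #(egyptianFractions N) / N) atTop ≤
      Real.log 2 - β * ∑ i ∈ Icc 1 ℓ, chainGap 𝔞 ℓ i * reciprocalSumsDefect (𝔞 i) by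
    convert le_sub_mul_of_forall_lt h using 3
    exact sum_congr rfl fun i hi => by rw [hr i hi]; rfl
  intro β hβ
  obtain ⟨W, hW, hβW⟩ := exists_le_totient_div_mul_sum_isHighPower hM0 (hδ ▸ hβ)
  obtain ⟨C, hC⟩ := exists_log_card_egyptianFractions_le hM0 hne hS hmono hW
  refine (limsup_div_le_of_le_mul_add (fun N => Real.log_natCast_nonneg _) hC).trans ?_
  gcongr
end

section
/- Let 𝒰 := { N ≥ 1 : for all w_1,…,w_{N−1} ∈ {−1,0,+1}, ∑_{n=1}^{N−1} w_n/n ≠ 1/N }. If N ∈ 𝒰 then #𝔈_N = 2·#𝔈_{N−1}. Consequently, #𝔈_N ≥ 2^{#𝒰(N)} for every N ≥ 1, where 𝒰(N) := 𝒰 ∩ [1,N]. -/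
open Finset

/-- `𝒰` is the set of positive integers `N` such that no signed subsum
`∑_{n=1}^{N-1} w_n/n` with `w_n ∈ {-1,0,1}` equals `1/N`. -/
def goodSet : Set ℕ :=
  {N : ℕ | 1 ≤ N ∧ ∀ w : ℕ → ℚ,
    (∀ n ∈ Finset.Icc 1 (N - 1), w n ∈ ({-1, 0, 1} : Set ℚ)) →
    ∑ n ∈ Finset.Icc 1 (N - 1), w n / (n : ℚ) ≠ 1 / (N : ℚ)}

/-!
Splitting the subsets of `{1, …, N + 1}` according to whether they contain `N + 1` gives
`𝔈_{N+1} = 𝔈_N ∪ (𝔈_N + 1/(N+1))`. The difference of two elements of `𝔈_N` is a signed sum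
`∑ w_n/n` with `w_n ∈ {-1, 0, 1}`, so when `N + 1 ∈ 𝒰` the two pieces are disjoint and the
cardinality doubles. As `𝔈` is monotone and `#𝔈_0 = 1`, the lower bound follows by induction.
-/

section

variable {N : ℕ}

lemma egyptianFractions_mono : Monotone egyptianFractions := fun _ _ h =>
  image_subset_image (powerset_mono.2 (Icc_subset_Icc_right h))

lemma egyptianFractions_succ (N : ℕ) :
    egyptianFractions (N + 1) =
      egyptianFractions N ∪ (egyptianFractions N).image (· + 1 / (N + 1 : ℚ)) := by
  have hN : N + 1 ∉ Icc 1 N := by simp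
  rw [egyptianFractions, egyptianFractions, ← insert_Icc_right_eq_Icc_add_one (by omega),
    powerset_insert, image_union, image_image, image_image]
  congr 1
  refine image_congr fun s hs => ?_
  simp [sum_insert (fun h => hN (mem_powerset.1 hs h)), add_comm]

lemma exists_signed_sum_eq_sub {x y : ℚ} (hx : x ∈ egyptianFractions N)
    (hy : y ∈ egyptianFractions N) :
    ∃ w : ℕ → ℚ, (∀ n ∈ Icc 1 N, w n ∈ ({-1, 0, 1} : Set ℚ)) ∧
      ∑ n ∈ Icc 1 N, w n / n = x - y := by
  classical
  simp only [egyptianFractions, mem_image, mem_powerset] at hx hy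
  obtain ⟨s, hs, rfl⟩ := hx
  obtain ⟨t, ht, rfl⟩ := hy
  refine ⟨fun n => (if n ∈ s then 1 else 0) - (if n ∈ t then 1 else 0),
    fun n _ => by dsimp only; split_ifs <;> norm_num, ?_⟩
  simp only [sub_div, sum_sub_distrib, ite_div, zero_div, sum_ite_mem, inter_eq_right.2 hs,
    inter_eq_right.2 ht]

lemma disjoint_egyptianFractions_image_add (hN : N + 1 ∈ goodSet) :
    Disjoint (egyptianFractions N) ((egyptianFractions N).image (· + 1 / (N + 1 : ℚ))) := by
  refine disjoint_left.2 fun x hx hx' => ?_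
  obtain ⟨y, hy, rfl⟩ := mem_image.1 hx'
  obtain ⟨w, hw, hsum⟩ := exists_signed_sum_eq_sub hx hy
  exact hN.2 w hw (by simpa using hsum)

lemma card_egyptianFractions_succ (hN : N + 1 ∈ goodSet) :
    #(egyptianFractions (N + 1)) = 2 * #(egyptianFractions N) := by
  rw [egyptianFractions_succ, card_union_of_disjoint (disjoint_egyptianFractions_image_add hN),
    card_image_of_injective _ (add_left_injective _), two_mul]

end

lemma two_pow_ncard_inter_Icc_le {S : Set ℕ} {f : ℕ → ℕ} (hf : Monotone f) (h0 : 1 ≤ f 0)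
    (hS : ∀ N, N + 1 ∈ S → 2 * f N ≤ f (N + 1)) : ∀ N, 2 ^ (S ∩ Set.Icc 1 N).ncard ≤ f N
  | 0 => by simpa using h0
  | N + 1 => by
    rw [← Set.insert_Icc_right_eq_Icc_add_one (by omega)]
    by_cases h : N + 1 ∈ S
    · rw [Set.inter_insert_of_mem h, Set.ncard_insert_of_notMem (by simp)
        ((Set.finite_Icc 1 N).inter_of_right S), pow_succ]
      linarith [two_pow_ncard_inter_Icc_le hf h0 hS N, hS N h]
    · rw [Set.inter_insert_of_notMem h]
      exact (two_pow_ncard_inter_Icc_le hf h0 hS N).trans (hf N.le_succ)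

theorem doubling_and_lower_bound :
    (∀ N : ℕ, N ∈ goodSet →
      (egyptianFractions N).card = 2 * (egyptianFractions (N - 1)).card) ∧
    (∀ N : ℕ, 1 ≤ N →
      2 ^ (goodSet ∩ Set.Icc 1 N).ncard ≤ (egyptianFractions N).card) := by
  have hdouble : ∀ N : ℕ, N ∈ goodSet →
      #(egyptianFractions N) = 2 * #(egyptianFractions (N - 1)) := by
    rintro (_ | N) hN
    · exact absurd hN.1 (by norm_num)
    · exact card_egyptianFractions_succ hN
  refine ⟨hdouble, fun N _ => two_pow_ncard_inter_Icc_le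
    (fun _ _ h => card_le_card (egyptianFractions_mono h)) (by simp [egyptianFractions])
    (fun N hN => (hdouble (N + 1) hN).ge) N⟩
end

section
/- The set 𝒰 contains 1 and all prime numbers; that is, for every prime p, there are no w_1,…,w_{p−1} ∈ {−1,0,+1} with ∑_{n=1}^{p−1} w_n/n = 1/p. -/
open Finset

/-!
Clearing denominators: multiplying a signed sum `∑_{n<N} w_n/n` by `(N-1)!` gives an integer,
whereas `(N-1)!/N` is not an integer as soon as `N ∤ (N-1)!`, in particular for `N` prime.
-/

open Nat

lemma mul_sum_div_mem_bot {s : Finset ℕ} {L : ℕ} (hL : ∀ n ∈ s, n ∣ L) {w : ℕ → ℚ}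
    (hw : ∀ n ∈ s, w n ∈ (⊥ : Subring ℚ)) :
    (L : ℚ) * ∑ n ∈ s, w n / n ∈ (⊥ : Subring ℚ) := by
  rw [Finset.mul_sum]
  refine Subring.sum_mem _ fun n hn => ?_
  obtain ⟨c, hc⟩ := hL n hn
  rcases eq_or_ne n 0 with rfl | hn0
  · simp
  · have hterm : (L : ℚ) * (w n / n) = w n * c := by
      rw [hc]; push_cast; field_simp
    rw [hterm]
    exact Subring.mul_mem _ (hw n hn) (natCast_mem _ c)

lemma mem_bot_of_mem_signs {x : ℚ} (hx : x ∈ ({-1, 0, 1} : Set ℚ)) : x ∈ (⊥ : Subring ℚ) := by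
  rcases hx with rfl | rfl | rfl
  exacts [Subring.neg_mem _ (Subring.one_mem _), Subring.zero_mem _, Subring.one_mem _]

theorem mem_goodSet_of_not_dvd_factorial {N : ℕ} (hN : 1 ≤ N) (h : ¬ N ∣ (N - 1)!) :
    N ∈ goodSet := by
  refine ⟨hN, fun w hw hsum => h ?_⟩
  have hint := mul_sum_div_mem_bot (fun n hn => dvd_factorial (mem_Icc.1 hn).1 (mem_Icc.1 hn).2)
    fun n hn => mem_bot_of_mem_signs (hw n hn)
  rw [hsum] at hint
  obtain ⟨k, hk⟩ := Subring.mem_bot.1 hint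
  have hN0 : (N : ℚ) ≠ 0 := by positivity
  have hfactorial : ((N - 1)! : ℤ) = N * k := by
    exact_mod_cast (by rw [hk]; field_simp : ((N - 1)! : ℚ) = N * k)
  exact Int.natCast_dvd_natCast.1 ⟨k, hfactorial⟩

theorem one_and_primes_in_goodSet :
    1 ∈ goodSet ∧ ∀ p : ℕ, p.Prime → p ∈ goodSet := by
  refine ⟨⟨le_rfl, fun w _ => by simp⟩, fun p hp => ?_⟩
  exact mem_goodSet_of_not_dvd_factorial hp.one_lt.le fun h =>
    (Nat.sub_one_lt hp.ne_zero).not_ge (hp.dvd_factorial.1 h)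
end
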